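/- arXiv:2310.13111 — 6 statements merged into one kernel-verified Lean document; each statement's English description precedes it below -/
import Mathlib

section
/- For any Hermitian matrix X, the derivative of the matrix exponential at X, Y ↦ d/dε exp(X+εY)|_{ε=0} = ∫₀¹ e^{(1-s)X} Y e^{sX} ds, is an invertible linear map on the space of N×N matrices; in fact its eigenvalues on the basis v_i v_j† (with v_i an orthonormal eigenbasis of X with eigenvalues λ_i) are ∫₀¹ e^{(1-s)λ_i} e^{sλ_j} ds > 0. -/
/-!
Let `U` be the unitary matrix whose columns are the `vᵢ`, so that `X = U D Uᴴ` with
`D = diag λ` and `e^{tX} = U e^{tD} Uᴴ`. Then `e^{(1-s)X} Y e^{sX} = U (e^{(1-s)D} Z e^{sD}) Uᴴ`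
with `Z = Uᴴ Y U`, and sandwiching `Z` between diagonal matrices is a Hadamard product. After
integrating, the map becomes `Y ↦ U (G ⊙ Uᴴ Y U) Uᴴ` with `Gᵢⱼ = ∫₀¹ e^{(1-s)λᵢ} e^{sλⱼ} ds > 0`:
entrywise multiplication by nonzero numbers conjugated by a unitary, hence bijective, and it
scales `U Eᵢⱼ Uᴴ = vᵢ vⱼ†` by `Gᵢⱼ`.
-/

open Matrix NormedSpace

namespace Matrix

section Unitary

variable {n R : Type*} [Fintype n] [DecidableEq n] [CommRing R] [StarRing R]

theorem transpose_of_mem_unitaryGroup {v : n → n → R}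
    (horth : ∀ i j, star (v i) ⬝ᵥ v j = if i = j then 1 else 0) :
    (of v)ᵀ ∈ unitaryGroup n R := by
  rw [mem_unitaryGroup_iff']
  ext i j
  simpa [mul_apply, one_apply, dotProduct] using horth i j

theorem eq_mul_diagonal_mul_star_of_mulVec_eq {X : Matrix n n R} {v : n → n → R} {d : n → R}
    (hU : (of v)ᵀ ∈ unitaryGroup n R) (heig : ∀ i, X *ᵥ v i = d i • v i) :
    X = (of v)ᵀ * diagonal d * star (of v)ᵀ := by
  have hcols : X * (of v)ᵀ = (of v)ᵀ * diagonal d := by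
    ext a j
    rw [mul_diagonal]
    simpa [mul_apply, mulVec, dotProduct, mul_comm] using congrFun (heig j) a
  rw [← hcols, mul_assoc, mem_unitaryGroup_iff.mp hU, mul_one]

theorem transpose_of_mul_single_mul_star (v : n → n → R) (i j : n) :
    (of v)ᵀ * single i j 1 * star (of v)ᵀ = vecMulVec (v i) (star (v j)) := by
  rw [single_eq_single_vecMulVec_single, mul_vecMulVec, vecMulVec_mul, mulVec_single_one,
    single_one_vecMul]
  ext a b
  simp [vecMulVec_apply]

end Unitary

theorem exp_smul_conj_diagonal {n : Type*} [Fintype n] [DecidableEq n] {U : Matrix n n ℂ}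
    (hU : U ∈ unitaryGroup n ℂ) (d : n → ℝ) (t : ℝ) :
    exp (t • (U * diagonal (fun i => (d i : ℂ)) * star U))
      = U * diagonal (fun i => (Real.exp (t * d i) : ℂ)) * star U := by
  have hinv : U⁻¹ = star U := inv_eq_right_inv (mem_unitaryGroup_iff.mp hU)
  have hunit : IsUnit U := IsUnit.of_mul_eq_one _ (mem_unitaryGroup_iff.mp hU)
  have hexp : exp (t • fun i => (d i : ℂ)) = fun i => (Real.exp (t * d i) : ℂ) := by
    ext i
    simp [← Complex.exp_eq_exp_ℂ, Complex.ofReal_exp]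
  rw [← hinv, ← Matrix.smul_mul, ← Matrix.mul_smul, ← diagonal_smul, exp_conj _ _ hunit,
    exp_diagonal, hexp]

theorem diagonal_mul_mul_diagonal {m n R : Type*} [Fintype m] [Fintype n] [DecidableEq m]
    [DecidableEq n] [CommSemiring R] (a : m → R) (b : n → R) (Z : Matrix m n R) :
    diagonal a * Z * diagonal b = of (fun i j => a i * b j) ⊙ Z := by
  ext i j
  simp only [mul_diagonal, diagonal_mul, hadamard_apply, of_apply]
  ring

theorem hadamard_single {m n R : Type*} [DecidableEq m] [DecidableEq n] [MulZeroClass R]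
    (A : Matrix m n R) (i : m) (j : n) (c : R) :
    A ⊙ single i j c = single i j (A i j * c) := by
  ext k l
  by_cases h : i = k ∧ j = l
  · obtain ⟨rfl, rfl⟩ := h
    simp
  · simp [h]

theorem hadamard_left_bijective {m n K : Type*} [GroupWithZero K] {A : Matrix m n K}
    (hA : ∀ i j, A i j ≠ 0) : Function.Bijective (A ⊙ ·) := by
  refine Function.bijective_iff_has_inverse.mpr
    ⟨fun Z => (of fun i j => (A i j)⁻¹) ⊙ Z, ?_, ?_⟩ <;>
  · intro Z
    ext i j
    simp [hA i j]

theorem of_intervalIntegral_mul_mul {l m m' k 𝕜 : Type*} [Fintype m] [Fintype m'] [RCLike 𝕜]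
    (U : Matrix l m 𝕜) (A : ℝ → Matrix m m' 𝕜) (V : Matrix m' k 𝕜) {a b : ℝ}
    (hA : ∀ i j, IntervalIntegrable (fun s => A s i j) MeasureTheory.volume a b) :
    of (fun p q => ∫ s in a..b, (U * A s * V) p q)
      = U * of (fun i j => ∫ s in a..b, A s i j) * V := by
  ext p q
  simp only [of_apply, mul_apply, Finset.sum_mul]
  rw [intervalIntegral.integral_finsetSum]
  · refine Finset.sum_congr rfl fun j _ => ?_
    rw [intervalIntegral.integral_finsetSum]
    · refine Finset.sum_congr rfl fun i _ => ?_
      rw [intervalIntegral.integral_mul_const, intervalIntegral.integral_const_mul]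
    · exact fun i _ => ((hA i j).const_mul _).mul_const _
  · refine fun j _ => ?_
    simpa only [Finset.sum_fn] using
      IntervalIntegrable.sum _ fun i _ => ((hA i j).const_mul (U p i)).mul_const (V j q)

theorem of_intervalIntegral_ofReal_hadamard {m n : Type*} (F : ℝ → m → n → ℝ)
    (Z : Matrix m n ℂ) {a b : ℝ} :
    of (fun i j => ∫ s in a..b, (of (fun i j => (F s i j : ℂ)) ⊙ Z) i j)
      = of (fun i j => ((∫ s in a..b, F s i j : ℝ) : ℂ)) ⊙ Z := by
  ext i j
  simp [intervalIntegral.integral_mul_const, intervalIntegral.integral_ofReal]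

end Matrix

/-- The first divided difference `(exp a - exp b) / (a - b)` of `Real.exp` (for `a ≠ b`). -/
noncomputable def expDividedDifference (a b : ℝ) : ℝ :=
  ∫ s in (0:ℝ)..1, Real.exp ((1 - s) * a) * Real.exp (s * b)

theorem expDividedDifference_pos (a b : ℝ) : 0 < expDividedDifference a b :=
  intervalIntegral.intervalIntegral_pos_of_pos (Continuous.intervalIntegrable (by fun_prop) 0 1)
    (fun _ => by positivity) zero_lt_one

section ConjDiagonal

variable {n : Type*} [Fintype n] [DecidableEq n] {U : Matrix n n ℂ}

theorem exp_smul_mul_mul_exp_smul_conj_diagonal (hU : U ∈ unitaryGroup n ℂ) (d : n → ℝ)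
    (Y : Matrix n n ℂ) (s : ℝ) :
    exp ((1 - s) • (U * diagonal (fun i => (d i : ℂ)) * star U)) * Y *
        exp (s • (U * diagonal (fun i => (d i : ℂ)) * star U))
      = U * (of (fun i j => ((Real.exp ((1 - s) * d i) * Real.exp (s * d j) : ℝ) : ℂ))
          ⊙ (star U * Y * U)) * star U := by
  rw [exp_smul_conj_diagonal hU, exp_smul_conj_diagonal hU]
  simp only [Complex.ofReal_mul, ← diagonal_mul_mul_diagonal, mul_assoc]

theorem of_intervalIntegral_exp_mul_mul_exp_conj_diagonal (hU : U ∈ unitaryGroup n ℂ)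
    (d : n → ℝ) (Y : Matrix n n ℂ) :
    of (fun a b => ∫ s in (0:ℝ)..1,
        (exp ((1 - s) • (U * diagonal (fun i => (d i : ℂ)) * star U)) * Y *
          exp (s • (U * diagonal (fun i => (d i : ℂ)) * star U))) a b)
      = U * (of (fun i j => (expDividedDifference (d i) (d j) : ℂ)) ⊙ (star U * Y * U))
          * star U := by
  simp only [exp_smul_mul_mul_exp_smul_conj_diagonal hU]
  rw [of_intervalIntegral_mul_mul, of_intervalIntegral_ofReal_hadamard]
  · rfl
  · intro i j
    exact Continuous.intervalIntegrable (by simp only [hadamard_apply, of_apply]; fun_prop) _ _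

end ConjDiagonal

theorem deriv_exp_invertible_general {N : ℕ} (X : Matrix (Fin N) (Fin N) ℂ)
    (v : Fin N → Fin N → ℂ) (lam : Fin N → ℝ)
    (horth : ∀ i j, star (v i) ⬝ᵥ v j = if i = j then 1 else 0)
    (heig : ∀ i, X *ᵥ v i = (lam i : ℂ) • v i) :
    Function.Bijective (fun Y : Matrix (Fin N) (Fin N) ℂ =>
      Matrix.of fun a b => ∫ s in (0:ℝ)..1,
        (exp ((1 - s) • X) * Y * exp (s • X)) a b) ∧
    ∀ i j,
      (Matrix.of fun a b => ∫ s in (0:ℝ)..1,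
          (exp ((1 - s) • X) * vecMulVec (v i) (star (v j)) * exp (s • X)) a b)
        = (∫ s in (0:ℝ)..1, Real.exp ((1 - s) * lam i) * Real.exp (s * lam j)) •
            vecMulVec (v i) (star (v j)) ∧
      0 < ∫ s in (0:ℝ)..1, Real.exp ((1 - s) * lam i) * Real.exp (s * lam j) := by
  have hU := transpose_of_mem_unitaryGroup horth
  set G : Matrix (Fin N) (Fin N) ℂ := of fun i j => (expDividedDifference (lam i) (lam j) : ℂ)
  set e := Unitary.conjStarAlgAut ℂ _ ⟨_, hU⟩
  have hL : ∀ Y, (of fun a b => ∫ s in (0:ℝ)..1, (exp ((1 - s) • X) * Y * exp (s • X)) a b)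
      = e (G ⊙ e.symm Y) := by
    intro Y
    rw [eq_mul_diagonal_mul_star_of_mulVec_eq hU heig]
    exact of_intervalIntegral_exp_mul_mul_exp_conj_diagonal hU lam Y
  refine ⟨?_, fun i j => ⟨?_, expDividedDifference_pos (lam i) (lam j)⟩⟩
  · have hG : ∀ i j, G i j ≠ 0 := fun i j => by
      simpa [G] using (expDividedDifference_pos (lam i) (lam j)).ne'
    simp only [hL]
    exact (EquivLike.bijective e).comp
      ((hadamard_left_bijective hG).comp (EquivLike.bijective e.symm))
  · have hE : e (single i j 1) = vecMulVec (v i) (star (v j)) :=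
      transpose_of_mul_single_mul_star v i j
    rw [hL, ← hE, e.symm_apply_apply, hadamard_single, mul_one, ← Complex.coe_smul, ← map_smul,
      smul_single, smul_eq_mul, mul_one]
    rfl

/-- The derivative of the matrix exponential at a Hermitian matrix `X`,
`Y ↦ ∫₀¹ e^{(1-s)X} Y e^{sX} ds`, is an invertible (bijective) linear map on matrices;
its eigenvectors are `vᵢ vⱼ†` (for `vᵢ` an orthonormal eigenbasis of `X` with
eigenvalues `λᵢ`) with positive eigenvalues `∫₀¹ e^{(1-s)λᵢ} e^{sλⱼ} ds`. -/
theorem deriv_exp_invertible {N : ℕ} (X : Matrix (Fin N) (Fin N) ℂ)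
    (hX : X.IsHermitian) (v : Fin N → Fin N → ℂ) (lam : Fin N → ℝ)
    (horth : ∀ i j, star (v i) ⬝ᵥ v j = if i = j then 1 else 0)
    (heig : ∀ i, X *ᵥ v i = (lam i : ℂ) • v i) :
    Function.Bijective (fun Y : Matrix (Fin N) (Fin N) ℂ =>
      Matrix.of fun a b => ∫ s in (0:ℝ)..1,
        (exp ((1 - s) • X) * Y * exp (s • X)) a b) ∧
    ∀ i j,
      (Matrix.of fun a b => ∫ s in (0:ℝ)..1,
          (exp ((1 - s) • X) * vecMulVec (v i) (star (v j)) * exp (s • X)) a b)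
        = (∫ s in (0:ℝ)..1, Real.exp ((1 - s) * lam i) * Real.exp (s * lam j)) •
            vecMulVec (v i) (star (v j)) ∧
      0 < ∫ s in (0:ℝ)..1, Real.exp ((1 - s) * lam i) * Real.exp (s * lam j) :=
  deriv_exp_invertible_general X v lam horth heig
end

section
/- If S = {O_1,…,O_n} is a set of linearly independent traceless Hermitian operators on ℂ^N, then E_S has nonempty interior in ℝⁿ and contains the origin as an interior point. -/
/-!
For small `t`, the matrix `ρ = I/N + ∑ⱼ tⱼ Oⱼ` is a density matrix: it has trace one because the
`Oⱼ` are traceless, and it is positive semidefinite as soon as the operator norm of `∑ⱼ tⱼ Oⱼ` is at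
most `1/N`. Its expectation vector is `G t`, where `G = (Re tr(Oᵢ Oⱼ))` is the Gram matrix of the
`Oⱼ` for the Hilbert–Schmidt inner product, hence invertible. So `t ↦ G t` is an open map sending a
neighbourhood of `0` into `E_S`, and `0 = G 0` is an interior point.
-/

open scoped ComplexOrder
open Matrix

/-- The set of joint expectation values of a tuple of Hermitian matrices over all
density matrices. -/
def expVals {N n : ℕ} (O : Fin n → Matrix (Fin N) (Fin N) ℂ) : Set (Fin n → ℝ) :=
  {x | ∃ ρ : Matrix (Fin N) (Fin N) ℂ, ρ.PosSemidef ∧ ρ.trace = 1 ∧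
    ∀ i, x i = ((ρ * O i).trace).re}

theorem Matrix.IsHermitian.eq_zero_of_re_trace_mul_self_eq_zero {m : Type*} [Fintype m]
    {H : Matrix m m ℂ} (hH : H.IsHermitian) (h : (H * H).trace.re = 0) : H = 0 := by
  have hnonneg : 0 ≤ (Hᴴ * H).trace := (posSemidef_conjTranspose_mul_self H).trace_nonneg
  rw [← trace_conjTranspose_mul_self_eq_zero_iff]
  rw [hH.eq] at hnonneg ⊢
  exact Complex.ext h (Complex.nonneg_iff.mp hnonneg).2.symm

section L2OperatorNorm

open scoped MatrixOrder Matrix.Norms.L2Operator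

theorem Matrix.IsHermitian.posSemidef_smul_one_add {m : Type*} [Fintype m] [DecidableEq m]
    {H : Matrix m m ℂ} (hH : H.IsHermitian) {c : ℝ} (hc : ‖H‖ ≤ c) :
    (c • (1 : Matrix m m ℂ) + H).PosSemidef := by
  rw [← nonneg_iff_posSemidef]
  have h := hH.isSelfAdjoint.neg_algebraMap_norm_le_self
  rw [Algebra.algebraMap_eq_smul_one, neg_le_iff_add_nonneg] at h
  calc (0 : Matrix m m ℂ) ≤ (c - ‖H‖) • (1 : Matrix m m ℂ) + (H + ‖H‖ • 1) :=
        add_nonneg (smul_nonneg (sub_nonneg.mpr hc) zero_le_one) h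
    _ = c • 1 + H := by module

end L2OperatorNorm

variable {m ι : Type*} [Fintype ι]

theorem isHermitian_linearCombination {O : ι → Matrix m m ℂ} (hherm : ∀ i, (O i).IsHermitian)
    (t : ι → ℝ) : (Fintype.linearCombination ℝ O t).IsHermitian :=
  isSelfAdjoint_sum _ fun i _ => (hherm i).smul (IsSelfAdjoint.all (t i))

variable [Fintype m]

def expectationMap (O : ι → Matrix m m ℂ) : Matrix m m ℂ →ₗ[ℝ] ι → ℝ where
  toFun ρ i := (ρ * O i).trace.re
  map_add' ρ σ := by ext i; simp [add_mul]
  map_smul' c ρ := by ext i; simp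

theorem re_trace_mul_linearCombination (O : ι → Matrix m m ℂ) (A : Matrix m m ℂ) (t : ι → ℝ) :
    (A * Fintype.linearCombination ℝ O t).trace.re = ∑ i, t i * expectationMap O A i := by
  simp [Fintype.linearCombination_apply, Matrix.mul_sum, trace_sum, expectationMap]

theorem injective_expectationMap_comp_linearCombination {O : ι → Matrix m m ℂ}
    (hherm : ∀ i, (O i).IsHermitian) (hind : LinearIndependent ℝ O) :
    Function.Injective (expectationMap O ∘ₗ Fintype.linearCombination ℝ O) := by
  rw [← LinearMap.ker_eq_bot, LinearMap.ker_eq_bot']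
  intro t ht
  set H := Fintype.linearCombination ℝ O t
  have hHH : (H * H).trace.re = 0 := by
    simp only [H, re_trace_mul_linearCombination, ← LinearMap.comp_apply, ht, Pi.zero_apply,
      mul_zero, Finset.sum_const_zero]
  refine hind.fintypeLinearCombination_injective ?_
  rw [map_zero]
  exact (isHermitian_linearCombination hherm t).eq_zero_of_re_trace_mul_self_eq_zero hHH

section L2OperatorNorm

open scoped Matrix.Norms.L2Operator

theorem mem_expVals_of_norm_le {N n : ℕ} [NeZero N] {O : Fin n → Matrix (Fin N) (Fin N) ℂ}
    (hherm : ∀ i, (O i).IsHermitian) (htr : ∀ i, (O i).trace = 0) {t : Fin n → ℝ}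
    (ht : ‖Fintype.linearCombination ℝ O t‖ ≤ (N : ℝ)⁻¹) :
    (expectationMap O ∘ₗ Fintype.linearCombination ℝ O) t ∈ expVals O := by
  refine ⟨(N : ℝ)⁻¹ • 1 + Fintype.linearCombination ℝ O t,
    (isHermitian_linearCombination hherm t).posSemidef_smul_one_add ht, ?_, fun i => ?_⟩
  · simp [Fintype.linearCombination_apply, trace_sum, htr]
  · simp [expectationMap, add_mul, htr]

theorem eventually_mem_expVals {N n : ℕ} [NeZero N] {O : Fin n → Matrix (Fin N) (Fin N) ℂ}
    (hherm : ∀ i, (O i).IsHermitian) (htr : ∀ i, (O i).trace = 0) :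
    ∀ᶠ t in nhds 0, (expectationMap O ∘ₗ Fintype.linearCombination ℝ O) t ∈ expVals O := by
  have hcont : Continuous fun t => ‖Fintype.linearCombination ℝ O t‖ := by fun_prop
  have hsmall : ∀ᶠ t in nhds 0, ‖Fintype.linearCombination ℝ O t‖ < (N : ℝ)⁻¹ :=
    hcont.continuousAt.eventually_lt continuousAt_const (by simp [NeZero.pos N])
  exact hsmall.mono fun t ht => mem_expVals_of_norm_le hherm htr ht.le

end L2OperatorNorm

/-- For linearly independent traceless Hermitian operators, E_S has nonempty
interior and contains the origin as an interior point. -/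
theorem expVals_interior_nonempty {N n : ℕ} [NeZero N]
    (O : Fin n → Matrix (Fin N) (Fin N) ℂ)
    (hherm : ∀ i, (O i).IsHermitian) (htr : ∀ i, (O i).trace = 0)
    (hind : LinearIndependent ℝ O) :
    (0 : Fin n → ℝ) ∈ interior (expVals O) ∧ (interior (expVals O)).Nonempty := by
  set L := expectationMap O ∘ₗ Fintype.linearCombination ℝ O
  have hL : IsOpenMap L := L.isOpenMap_of_finiteDimensional <|
    LinearMap.injective_iff_surjective.mp (injective_expectationMap_comp_linearCombination hherm hind)
  have hE : expVals O ∈ nhds (0 : Fin n → ℝ) := by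
    have himage := hL.image_mem_nhds (eventually_mem_expVals hherm htr)
    rw [map_zero] at himage
    exact Filter.mem_of_superset himage (Set.image_preimage_subset L _)
  have h0 : (0 : Fin n → ℝ) ∈ interior (expVals O) := mem_interior_iff_mem_nhds.mpr hE
  exact ⟨h0, 0, h0⟩
end

section
/- For a set S of n linearly independent traceless Hermitian operators on ℂ^N, E_S equals the intersection over all unit vectors ê ∈ ℝⁿ of the half-spaces { x ∈ ℝⁿ : ê·x ≥ λ_min(ê·O) }, where ê·O = Σᵢ êᵢ Oᵢ. -/
open scoped ComplexOrder
open Matrix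

/-- The smallest eigenvalue of a Hermitian matrix. -/
noncomputable def minEig {N : ℕ} [NeZero N] {A : Matrix (Fin N) (Fin N) ℂ}
    (hA : A.IsHermitian) : ℝ :=
  Finset.univ.inf' Finset.univ_nonempty hA.eigenvalues

/-! The expectation values form the image of the compact convex set of density matrices under a
linear map, so `expVals O` is compact and convex. Diagonalising `A = U D U*` turns `tr (ρ A)` into
an average of the eigenvalues of `A` with weights `(U* ρ U)ₖₖ`, so `tr (ρ A) ≥ λ_min A`, with
equality at the projector onto a minimal eigenvector; applied to `A = e·O` this is the
half-space bound, attained on `expVals O`. Conversely, a point outside `expVals O` is strictly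
separated from it by Hahn–Banach, and normalising the separating functional gives a unit
direction `e` whose half-space does not contain the point. -/

namespace Matrix

structure IsDensityMatrix {m : Type*} [Fintype m] (ρ : Matrix m m ℂ) : Prop where
  posSemidef : ρ.PosSemidef
  trace_eq_one : ρ.trace = 1

namespace IsDensityMatrix

variable {m : Type*} [Fintype m] {ρ : Matrix m m ℂ}

lemma re_diag_nonneg (hρ : ρ.IsDensityMatrix) (k : m) : 0 ≤ (ρ k k).re :=
  (Complex.nonneg_iff.mp hρ.posSemidef.diag_nonneg).1

lemma sum_re_diag (hρ : ρ.IsDensityMatrix) : ∑ k, (ρ k k).re = 1 := by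
  simpa [trace, Complex.re_sum] using congrArg Complex.re hρ.trace_eq_one

lemma diag_le_one (hρ : ρ.IsDensityMatrix) (k : m) : ρ k k ≤ 1 := by
  rw [← hρ.trace_eq_one]
  exact Finset.single_le_sum (f := fun k => ρ k k) (fun k _ => hρ.posSemidef.diag_nonneg)
    (Finset.mem_univ k)

lemma norm_apply_le_one (hρ : ρ.IsDensityMatrix) (i j : m) : ‖ρ i j‖ ≤ 1 := by
  -- the principal `2 × 2` minor on `j, i` gives `|ρ i j|² ≤ ρ j j * ρ i i`
  have hdet := (hρ.posSemidef.submatrix ![j, i]).det_nonneg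
  simp only [det_fin_two, submatrix_apply, Matrix.cons_val_zero, Matrix.cons_val_one,
    sub_nonneg] at hdet
  rw [← hρ.posSemidef.isHermitian.apply j i, Complex.star_def, Complex.conj_mul'] at hdet
  have hsq : (‖ρ i j‖ ^ 2 : ℂ) ≤ 1 :=
    hdet.trans (mul_le_one₀ (hρ.diag_le_one j) hρ.posSemidef.diag_nonneg (hρ.diag_le_one i))
  exact (sq_le_one_iff₀ (norm_nonneg _)).mp (mod_cast hsq)

lemma unitary_mul_mul_star [DecidableEq m] {U : Matrix m m ℂ} (hU : U ∈ unitaryGroup m ℂ)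
    (hρ : ρ.IsDensityMatrix) : (U * ρ * star U).IsDensityMatrix where
  posSemidef := by
    simpa [star_eq_conjTranspose] using hρ.posSemidef.mul_mul_conjTranspose_same U
  trace_eq_one := by
    rw [trace_mul_cycle, (mem_unitaryGroup_iff').mp hU, one_mul, hρ.trace_eq_one]

end IsDensityMatrix

variable {m : Type*} [Fintype m]

lemma isClosed_setOf_posSemidef : IsClosed {ρ : Matrix m m ℂ | ρ.PosSemidef} := by
  simp only [posSemidef_iff_dotProduct_mulVec, Set.ofPred_and, Set.ofPred_forall]
  exact (isClosed_eq continuous_id.matrix_conjTranspose continuous_id).inter <|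
    isClosed_iInter fun x => isClosed_le continuous_const <|
      continuous_const.dotProduct (continuous_id.matrix_mulVec continuous_const)

lemma isClosed_setOf_isDensityMatrix : IsClosed {ρ : Matrix m m ℂ | ρ.IsDensityMatrix} := by
  rw [show {ρ : Matrix m m ℂ | ρ.IsDensityMatrix} = {ρ | ρ.PosSemidef} ∩ {ρ | ρ.trace = 1} from
    Set.ext fun _ => ⟨fun h => ⟨h.1, h.2⟩, fun h => ⟨h.1, h.2⟩⟩]
  exact isClosed_setOf_posSemidef.inter (isClosed_eq continuous_id.matrix_trace continuous_const)

attribute [local instance] Matrix.normedAddCommGroup Matrix.normedSpace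

lemma isCompact_setOf_isDensityMatrix : IsCompact {ρ : Matrix m m ℂ | ρ.IsDensityMatrix} := by
  refine Metric.isCompact_of_isClosed_isBounded isClosed_setOf_isDensityMatrix ?_
  refine isBounded_iff_forall_norm_le.mpr ⟨1, fun ρ hρ => ?_⟩
  exact (norm_le_iff zero_le_one).mpr (IsDensityMatrix.norm_apply_le_one hρ)

lemma convex_setOf_isDensityMatrix : Convex ℝ {ρ : Matrix m m ℂ | ρ.IsDensityMatrix} := by
  intro ρ hρ σ hσ a b ha hb hab
  refine ⟨(hρ.posSemidef.smul ha).add (hσ.posSemidef.smul hb), ?_⟩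
  rw [trace_add, trace_smul, trace_smul, hρ.trace_eq_one, hσ.trace_eq_one, ← add_smul, hab,
    one_smul]

end Matrix

namespace Matrix.IsHermitian

variable {m : Type*} [Fintype m] [DecidableEq m] {A : Matrix m m ℂ}

lemma re_trace_mul_eq_sum_eigenvalues (hA : A.IsHermitian) (ρ : Matrix m m ℂ) :
    ((ρ * A).trace).re =
      ∑ k, ((star (hA.eigenvectorUnitary : Matrix m m ℂ) * ρ * hA.eigenvectorUnitary) k k).re *
        hA.eigenvalues k := by
  conv_lhs => rw [hA.spectral_theorem, Unitary.conjStarAlgAut_apply, ← mul_assoc, ← mul_assoc,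
    trace_mul_comm, ← mul_assoc, ← mul_assoc]
  simp [trace, mul_diagonal, Complex.re_sum, Complex.mul_re]

end Matrix.IsHermitian

section minEig

variable {N : ℕ} [NeZero N] {A : Matrix (Fin N) (Fin N) ℂ}

lemma minEig_le_re_trace_mul (hA : A.IsHermitian) {ρ : Matrix (Fin N) (Fin N) ℂ}
    (hρ : ρ.IsDensityMatrix) : minEig hA ≤ ((ρ * A).trace).re := by
  set U : Matrix (Fin N) (Fin N) ℂ := (hA.eigenvectorUnitary : Matrix (Fin N) (Fin N) ℂ)
  have hσ : (star U * ρ * U).IsDensityMatrix := by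
    simpa [U] using hρ.unitary_mul_mul_star (star hA.eigenvectorUnitary).2
  rw [hA.re_trace_mul_eq_sum_eigenvalues]
  calc minEig hA = ∑ k, ((star U * ρ * U) k k).re * minEig hA := by
        rw [← Finset.sum_mul, hσ.sum_re_diag, one_mul]
    _ ≤ ∑ k, ((star U * ρ * U) k k).re * hA.eigenvalues k :=
        Finset.sum_le_sum fun k _ => mul_le_mul_of_nonneg_left
          (Finset.inf'_le _ (Finset.mem_univ k)) (hσ.re_diag_nonneg k)

lemma exists_isDensityMatrix_re_trace_mul_eq_minEig (hA : A.IsHermitian) :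
    ∃ ρ : Matrix (Fin N) (Fin N) ℂ, ρ.IsDensityMatrix ∧ ((ρ * A).trace).re = minEig hA := by
  obtain ⟨k₀, -, hk₀⟩ := Finset.exists_mem_eq_inf' Finset.univ_nonempty hA.eigenvalues
  set U : Matrix (Fin N) (Fin N) ℂ := (hA.eigenvectorUnitary : Matrix (Fin N) (Fin N) ℂ)
  set E : Matrix (Fin N) (Fin N) ℂ := diagonal (Pi.single k₀ 1)
  have hE : E.IsDensityMatrix :=
    ⟨PosSemidef.diagonal fun k => by by_cases h : k = k₀ <;> simp [h],
      by simp [E, trace_diagonal]⟩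
  have hUEU : star U * (U * E * star U) * U = E := by
    rw [← mul_assoc, ← mul_assoc, Unitary.coe_star_mul_self, one_mul, mul_assoc,
      Unitary.coe_star_mul_self, mul_one]
  refine ⟨U * E * star U, hE.unitary_mul_mul_star hA.eigenvectorUnitary.2, ?_⟩
  rw [hA.re_trace_mul_eq_sum_eigenvalues, hUEU]
  simp [E, Pi.single_apply, apply_ite Complex.re, minEig, hk₀]

end minEig

section expVals

variable {m ι : Type*} [Fintype m] [Fintype ι]

def expValMap (O : ι → Matrix m m ℂ) : Matrix m m ℂ →ₗ[ℝ] ι → ℝ where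
  toFun ρ i := ((ρ * O i).trace).re
  map_add' ρ σ := by ext i; simp [add_mul]
  map_smul' c ρ := by ext i; simp [Complex.real_smul]

lemma dotProduct_expValMap (O : ι → Matrix m m ℂ) (ρ : Matrix m m ℂ) (e : ι → ℝ) :
    e ⬝ᵥ expValMap O ρ = ((ρ * ∑ i, e i • O i).trace).re := by
  simp [dotProduct, expValMap, Finset.mul_sum, trace_sum, Complex.re_sum, Complex.real_smul]

variable {N n : ℕ} (O : Fin n → Matrix (Fin N) (Fin N) ℂ)

lemma expVals_eq_image : expVals O = expValMap O '' {ρ | ρ.IsDensityMatrix} := by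
  ext x
  constructor
  · rintro ⟨ρ, hρ, htr, hx⟩
    exact ⟨ρ, ⟨hρ, htr⟩, funext fun i => (hx i).symm⟩
  · rintro ⟨ρ, hρ, rfl⟩
    exact ⟨ρ, hρ.posSemidef, hρ.trace_eq_one, fun i => rfl⟩

lemma isCompact_expVals : IsCompact (expVals O) := by
  rw [expVals_eq_image]
  exact isCompact_setOf_isDensityMatrix.image (expValMap O).continuous_of_finiteDimensional

lemma convex_expVals : Convex ℝ (expVals O) := by
  rw [expVals_eq_image]
  exact convex_setOf_isDensityMatrix.linear_image (expValMap O)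

end expVals

lemma exists_sum_sq_eq_one_dotProduct_lt {ι : Type*} [Fintype ι] {C : Set (ι → ℝ)}
    (hconv : Convex ℝ C) (hclosed : IsClosed C) (hne : C.Nonempty) {x : ι → ℝ} (hx : x ∉ C) :
    ∃ e : ι → ℝ, ∑ i, e i ^ 2 = 1 ∧ ∀ a ∈ C, e ⬝ᵥ x < e ⬝ᵥ a := by
  classical
  obtain ⟨f, u, hfC, hfx⟩ := geometric_hahn_banach_closed_point hconv hclosed hx
  set v : ι → ℝ := fun i => f (Pi.single i 1)
  have hf : ∀ y, f y = v ⬝ᵥ y := fun y => by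
    conv_lhs => rw [pi_eq_sum_univ' y]
    simp [v, dotProduct, mul_comm]
  obtain ⟨a₀, ha₀⟩ := hne
  have hv : v ≠ 0 := by
    rintro hv
    have := (hfC a₀ ha₀).trans hfx
    simp [hf, hv] at this
  have hv_pos : 0 < v ⬝ᵥ v := by simpa using dotProduct_self_star_pos_iff.mpr hv
  set s := √(v ⬝ᵥ v)
  have hs : 0 < s := Real.sqrt_pos.mpr hv_pos
  refine ⟨-s⁻¹ • v, ?_, fun a ha => ?_⟩
  · have : ∑ i, (-s⁻¹ • v) i ^ 2 = (s ^ 2)⁻¹ * (v ⬝ᵥ v) := by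
      simp only [dotProduct, Finset.mul_sum, Pi.smul_apply, smul_eq_mul]
      exact Finset.sum_congr rfl fun i _ => by ring
    rw [this, Real.sq_sqrt hv_pos.le, inv_mul_cancel₀ hv_pos.ne']
  · simp only [smul_dotProduct, ← hf, smul_eq_mul, neg_mul, neg_lt_neg_iff]
    exact mul_lt_mul_of_pos_left ((hfC a ha).trans hfx) (inv_pos.mpr hs)

theorem expVals_eq_iInter_halfSpaces_general {N n : ℕ} [NeZero N]
    (O : Fin n → Matrix (Fin N) (Fin N) ℂ)
    (hsum : ∀ e : Fin n → ℝ, (∑ i, e i • O i).IsHermitian) :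
    expVals O =
      ⋂ e ∈ {e : Fin n → ℝ | ∑ i, (e i) ^ 2 = 1},
        {x : Fin n → ℝ | minEig (hsum e) ≤ e ⬝ᵥ x} := by
  have hattained : ∀ e, ∃ a ∈ expVals O, e ⬝ᵥ a = minEig (hsum e) := fun e => by
    obtain ⟨ρ, hρ, hρmin⟩ := exists_isDensityMatrix_re_trace_mul_eq_minEig (hsum e)
    refine ⟨expValMap O ρ, expVals_eq_image O ▸ ⟨ρ, hρ, rfl⟩, ?_⟩
    rw [dotProduct_expValMap, hρmin]
  refine Set.Subset.antisymm ?_ fun x hx => by_contra fun hxE => ?_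
  · rw [expVals_eq_image]
    rintro _ ⟨ρ, hρ, rfl⟩
    simp only [Set.mem_iInter, Set.mem_ofPred_eq, dotProduct_expValMap]
    exact fun e _ => minEig_le_re_trace_mul _ hρ
  · obtain ⟨a₀, ha₀, -⟩ := hattained 0
    obtain ⟨e, he, hsep⟩ := exists_sum_sq_eq_one_dotProduct_lt (convex_expVals O)
      (isCompact_expVals O).isClosed ⟨a₀, ha₀⟩ hxE
    obtain ⟨a, ha, hea⟩ := hattained e
    have hxe : minEig (hsum e) ≤ e ⬝ᵥ x := Set.mem_iInter₂.mp hx e he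
    linarith [hsep a ha]

/-- For linearly independent traceless Hermitian operators, E_S equals the
intersection over all unit vectors ê ∈ ℝⁿ of the half-spaces
`{x | ê·x ≥ λ_min(ê·O)}`. -/
theorem expVals_eq_iInter_halfSpaces {N n : ℕ} [NeZero N]
    (O : Fin n → Matrix (Fin N) (Fin N) ℂ)
    (hherm : ∀ i, (O i).IsHermitian) (htr : ∀ i, (O i).trace = 0)
    (hind : LinearIndependent ℝ O)
    (hsum : ∀ e : Fin n → ℝ, (∑ i, e i • O i).IsHermitian) :
    expVals O =
      ⋂ e ∈ {e : Fin n → ℝ | ∑ i, (e i) ^ 2 = 1},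
        {x : Fin n → ℝ | minEig (hsum e) ≤ e ⬝ᵥ x} :=
  expVals_eq_iInter_halfSpaces_general O hsum
end

section
/- For a Hermitian matrix H, Hermitian O, and β > 0, defining the thermal expectation ⟨A⟩_β = tr(A e^{−βH})/tr(e^{−βH}) and ΔO = O − ⟨O⟩_β·𝟙, the integrated imaginary-time two-point function ∫₀^β tr(ΔO e^{−(β−τ)H} ΔO e^{−τH}) dτ / tr(e^{−βH}) is strictly positive whenever ΔO ≠ 0. -/
open Matrix NormedSpace

private lemma exp_smul_herm {N : ℕ} (H : Matrix (Fin N) (Fin N) ℂ) (hH : H.IsHermitian) (s : ℝ) :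
    exp (-(s • H)) = (hH.eigenvectorUnitary : Matrix (Fin N) (Fin N) ℂ) *
      diagonal (fun i => (Real.exp (-(s * hH.eigenvalues i)) : ℂ)) *
      star (hH.eigenvectorUnitary : Matrix (Fin N) (Fin N) ℂ) := by
  set U : Matrix (Fin N) (Fin N) ℂ := (hH.eigenvectorUnitary : Matrix (Fin N) (Fin N) ℂ) with hUdef
  have hU1 : U * star U = 1 := (Matrix.mem_unitaryGroup_iff).mp hH.eigenvectorUnitary.2
  have hinv : U⁻¹ = star U := Matrix.inv_eq_right_inv hU1
  have harg : -(s • H) = U * diagonal (fun i => ((-(s * hH.eigenvalues i) : ℝ) : ℂ)) * U⁻¹ := by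
    rw [hinv]
    conv_lhs => rw [hH.spectral_theorem]
    rw [Unitary.conjStarAlgAut_apply]
    rw [← hUdef]
    have : (diagonal (fun i => ((-(s * hH.eigenvalues i) : ℝ) : ℂ))) =
        -(s • diagonal ((fun a : ℝ => (a : ℂ)) ∘ hH.eigenvalues)) := by
      ext i j
      rcases eq_or_ne i j with h | h <;>
        simp [h, diagonal_apply, Complex.real_smul]
    rw [this]
    simp [Matrix.mul_smul, Matrix.smul_mul, Matrix.neg_mul, Matrix.mul_neg]
  rw [harg, Matrix.exp_conj U _ (isUnit_iff_exists.2 ⟨star U, hU1, mul_eq_one_comm.mp hU1⟩),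
    Matrix.exp_diagonal, hinv]
  congr 2
  funext i
  rw [Pi.exp_def]
  rw [← Complex.exp_eq_exp_ℂ]
  simp [Complex.ofReal_exp]


private lemma trace_MDMD {N : ℕ} (M : Matrix (Fin N) (Fin N) ℂ) (d e : Fin N → ℂ) :
    (M * Matrix.diagonal d * M * Matrix.diagonal e).trace
      = ∑ m, ∑ n, M m n * d n * (M n m * e m) := by
  classical
  rw [Matrix.trace]
  simp only [Matrix.diag_apply]
  refine Finset.sum_congr rfl fun m _ => ?_
  rw [Matrix.mul_diagonal, Matrix.mul_apply, Finset.sum_mul]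
  refine Finset.sum_congr rfl fun n _ => ?_
  rw [Matrix.mul_diagonal]
  ring

/-- Strict positivity of the integrated imaginary-time connected two-point function:
for Hermitian H, O and β > 0, with ΔO = O − ⟨O⟩_β·𝟙 ≠ 0,
∫₀^β tr(ΔO e^{−(β−τ)H} ΔO e^{−τH}) dτ / tr(e^{−βH}) > 0. -/
theorem thermal_twoPoint_pos {N : ℕ} (H O : Matrix (Fin N) (Fin N) ℂ)
    (hH : H.IsHermitian) (hO : O.IsHermitian) (β : ℝ) (hβ : 0 < β)
    (ΔO : Matrix (Fin N) (Fin N) ℂ)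
    (hΔO : ΔO = O -
      (((O * exp (-(β • H))).trace / (exp (-(β • H))).trace) • 1))
    (hne : ΔO ≠ 0) :
    0 < (∫ τ in (0:ℝ)..β,
          ((ΔO * exp (-((β - τ) • H)) * ΔO * exp (-(τ • H))).trace).re) /
        ((exp (-(β • H))).trace).re := by
  classical
  -- N positive
  have hN : Nonempty (Fin N) := by
    rcases Nat.eq_zero_or_pos N with h | h
    · subst h; exact absurd (Subsingleton.elim ΔO 0) hne
    · exact ⟨⟨0, h⟩⟩
  set U : Matrix (Fin N) (Fin N) ℂ := (hH.eigenvectorUnitary : Matrix (Fin N) (Fin N) ℂ) with hUdef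
  set lam := hH.eigenvalues with hlam
  have hU1 : U * star U = 1 := (Matrix.mem_unitaryGroup_iff).mp hH.eigenvectorUnitary.2
  have hU2 : star U * U = 1 := mul_eq_one_comm.mp hU1
  have hexp : ∀ s : ℝ, exp (-(s • H)) =
      U * diagonal (fun i => (Real.exp (-(s * lam i)) : ℂ)) * star U :=
    fun s => exp_smul_herm H hH s
  -- ΔO is Hermitian
  have hEH : (exp (-(β • H))).IsHermitian := by
    have : (-(β • H))ᴴ = -(β • H) := by
      rw [conjTranspose_neg, conjTranspose_smul]
      simp [hH.eq]
    unfold Matrix.IsHermitian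
    rw [← Matrix.exp_conjTranspose, this]
  have hc : star ((O * exp (-(β • H))).trace / (exp (-(β • H))).trace)
      = (O * exp (-(β • H))).trace / (exp (-(β • H))).trace := by
    have h1 : star (O * exp (-(β • H))).trace = (O * exp (-(β • H))).trace := by
      rw [← Matrix.trace_conjTranspose, conjTranspose_mul, hEH.eq, hO.eq,
        Matrix.trace_mul_comm]
    have h2 : star (exp (-(β • H))).trace = (exp (-(β • H))).trace := by
      rw [← Matrix.trace_conjTranspose, hEH.eq]
    rw [star_div₀, h1, h2]
  have hΔOH : ΔO.IsHermitian := by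
    rw [hΔO]
    apply Matrix.IsHermitian.sub hO
    unfold Matrix.IsHermitian
    rw [conjTranspose_smul, conjTranspose_one, hc]
  -- conjugated observable
  set M : Matrix (Fin N) (Fin N) ℂ := star U * ΔO * U with hMdef
  have hUM : ΔO = U * M * star U := by
    rw [hMdef]
    rw [show U * (star U * ΔO * U) * star U = (U * star U) * ΔO * (U * star U) by
      simp only [mul_assoc], hU1, one_mul, mul_one]
  have hMH : M.IsHermitian := by
    unfold Matrix.IsHermitian
    rw [hMdef, conjTranspose_mul, conjTranspose_mul, hΔOH.eq]
    simp [Matrix.star_eq_conjTranspose, mul_assoc]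
  have hMne : M ≠ 0 := by
    intro h
    apply hne
    rw [hUM, h, mul_zero, zero_mul]
  obtain ⟨p, hp⟩ : ∃ p : Fin N × Fin N, M p.1 p.2 ≠ 0 := by
    by_contra h
    push_neg at h
    exact hMne (by ext i j; exact h (i, j))
  -- the real integrand
  set F : ℝ → ℝ := fun τ => ∑ m, ∑ n, Complex.normSq (M m n) *
      (Real.exp (-((β - τ) * lam n)) * Real.exp (-(τ * lam m))) with hF
  have htrace : ∀ τ : ℝ,
      ((ΔO * exp (-((β - τ) • H)) * ΔO * exp (-(τ • H))).trace).re = F τ := by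
    intro τ
    rw [hexp (β - τ), hexp τ, hUM]
    have collapse : (U * M * star U) * (U * diagonal (fun i => (Real.exp (-((β - τ) * lam i)) : ℂ)) * star U)
        * (U * M * star U) * (U * diagonal (fun i => (Real.exp (-(τ * lam i)) : ℂ)) * star U)
        = U * (M * diagonal (fun i => (Real.exp (-((β - τ) * lam i)) : ℂ))
            * M * diagonal (fun i => (Real.exp (-(τ * lam i)) : ℂ))) * star U := by
      have e1 : ∀ A B : Matrix (Fin N) (Fin N) ℂ, (U * A * star U) * (U * B * star U) = U * (A * B) * star U := by
        intro A B
        calc (U * A * star U) * (U * B * star U)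
            = U * (A * ((star U * U) * (B * star U))) := by simp only [mul_assoc]
          _ = U * (A * B) * star U := by rw [hU2, one_mul]; simp only [mul_assoc]
      rw [e1, e1, e1]
    rw [collapse, Matrix.trace_mul_cycle, hU2, one_mul, trace_MDMD]
    rw [Complex.re_sum]
    apply Finset.sum_congr rfl
    intro m _
    rw [Complex.re_sum]
    apply Finset.sum_congr rfl
    intro n _
    have hconj : M n m = (starRingEnd ℂ) (M m n) := by
      have := hMH.apply n m
      rw [← this]
      rfl
    rw [hconj]
    have : M m n * (Real.exp (-((β - τ) * lam n)) : ℂ) * ((starRingEnd ℂ) (M m n)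
          * (Real.exp (-(τ * lam m)) : ℂ))
        = ((Complex.normSq (M m n) * (Real.exp (-((β - τ) * lam n)) * Real.exp (-(τ * lam m))) : ℝ) : ℂ) := by
      push_cast
      rw [← Complex.mul_conj]
      ring
    rw [this, Complex.ofReal_re]
  -- positivity of F
  have hFpos : ∀ τ : ℝ, 0 < F τ := by
    intro τ
    rw [hF]
    apply Finset.sum_pos'
    · intro m _
      apply Finset.sum_nonneg
      intro n _
      exact mul_nonneg (Complex.normSq_nonneg _) (by positivity)
    · refine ⟨p.1, Finset.mem_univ _, ?_⟩
      apply Finset.sum_pos'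
      · intro n _; exact mul_nonneg (Complex.normSq_nonneg _) (by positivity)
      · exact ⟨p.2, Finset.mem_univ _,
          mul_pos (Complex.normSq_pos.mpr hp) (by positivity)⟩
  have hFcont : Continuous F := by
    rw [hF]
    apply continuous_finset_sum
    intro m _
    apply continuous_finset_sum
    intro n _
    fun_prop
  -- the integral is positive
  have hint : 0 < ∫ τ in (0:ℝ)..β,
      ((ΔO * exp (-((β - τ) • H)) * ΔO * exp (-(τ • H))).trace).re := by
    have : (fun τ : ℝ => ((ΔO * exp (-((β - τ) • H)) * ΔO * exp (-(τ • H))).trace).re) = F :=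
      funext htrace
    rw [this]
    exact intervalIntegral.intervalIntegral_pos_of_pos (hFcont.intervalIntegrable 0 β) hFpos hβ
  -- the denominator is positive
  have hden : 0 < ((exp (-(β • H))).trace).re := by
    rw [hexp β, Matrix.trace_mul_cycle, hU2, one_mul, Matrix.trace_diagonal,
      Complex.re_sum]
    apply Finset.sum_pos
    · intro i _
      simp only [Complex.ofReal_re]
      positivity
    · exact Finset.univ_nonempty
  exact div_pos hint hden
end

section
/- Let f : ℝⁿ → ℝⁿ be continuously differentiable with Jacobian J(x) positive definite (symmetric) at every point. Then f is injective; indeed for x₁ ≠ x₂, (x₂ − x₁)·(f(x₂) − f(x₁)) > 0. -/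
open Matrix

/-! Along the segment `t ↦ x₁ + t • (x₂ - x₁)` the function `t ↦ (x₂ - x₁) ⬝ᵥ f (x₁ + t • (x₂ - x₁))`
has derivative `(x₂ - x₁) ⬝ᵥ Df (x₂ - x₁) > 0`, so it is strictly increasing; comparing its values
at `t = 0` and `t = 1` gives `(x₂ - x₁) ⬝ᵥ (f x₂ - f x₁) > 0`, and injectivity follows. -/

variable {ι : Type*} [Fintype ι]

theorem HasDerivAt.const_dotProduct {g : ℝ → ι → ℝ} {g' : ι → ℝ} {t : ℝ} (v : ι → ℝ)
    (hg : HasDerivAt g g' t) : HasDerivAt (fun s => v ⬝ᵥ g s) (v ⬝ᵥ g') t :=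
  HasDerivAt.fun_sum fun i _ => (hasDerivAt_pi.1 hg i).const_mul (v i)

theorem dotProduct_sub_pos_of_fderiv_pos {f : (ι → ℝ) → ι → ℝ} (hf : Differentiable ℝ f)
    {x v : ι → ℝ} (hpos : ∀ t : ℝ, 0 < v ⬝ᵥ fderiv ℝ f (x + t • v) v) :
    0 < v ⬝ᵥ (f (x + v) - f x) := by
  have hline (t : ℝ) : HasDerivAt (fun s : ℝ => x + s • v) v t := by
    simpa using ((hasDerivAt_id t).smul_const v).const_add x
  have hderiv (t : ℝ) :
      HasDerivAt (fun s => v ⬝ᵥ f (x + s • v)) (v ⬝ᵥ fderiv ℝ f (x + t • v) v) t :=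
    ((hf _).hasFDerivAt.comp_hasDerivAt t (hline t)).const_dotProduct v
  have hlt := strictMono_of_hasDerivAt_pos hderiv hpos zero_lt_one
  simp only [zero_smul, add_zero, one_smul] at hlt
  rwa [dotProduct_sub, sub_pos]

theorem injective_of_dotProduct_sub_pos {f : (ι → ℝ) → ι → ℝ}
    (hf : ∀ x₁ x₂, x₁ ≠ x₂ → 0 < (x₂ - x₁) ⬝ᵥ (f x₂ - f x₁)) : Function.Injective f := by
  intro x₁ x₂ heq
  by_contra hne
  simpa [heq] using hf x₁ x₂ hne

theorem injective_of_posdef_jacobian_general {n : ℕ}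
    (f : (Fin n → ℝ) → (Fin n → ℝ))
    (hf : ContDiff ℝ 1 f)
    (hpos : ∀ x v, v ≠ 0 → 0 < v ⬝ᵥ fderiv ℝ f x v) :
    Function.Injective f ∧
      ∀ x₁ x₂, x₁ ≠ x₂ → 0 < (x₂ - x₁) ⬝ᵥ (f x₂ - f x₁) := by
  have hmono : ∀ x₁ x₂, x₁ ≠ x₂ → 0 < (x₂ - x₁) ⬝ᵥ (f x₂ - f x₁) := by
    intro x₁ x₂ hne
    have hv : x₂ - x₁ ≠ 0 := sub_ne_zero.mpr hne.symm
    simpa using dotProduct_sub_pos_of_fderiv_pos (hf.differentiable one_ne_zero)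
      fun t => hpos (x₁ + t • (x₂ - x₁)) _ hv
  exact ⟨injective_of_dotProduct_sub_pos hmono, hmono⟩

/-- If f : ℝⁿ → ℝⁿ is C¹ with symmetric, positive definite Jacobian everywhere,
then f is injective; indeed (x₂−x₁)·(f(x₂)−f(x₁)) > 0 for x₁ ≠ x₂. -/
theorem injective_of_posdef_jacobian {n : ℕ}
    (f : (Fin n → ℝ) → (Fin n → ℝ))
    (hf : ContDiff ℝ 1 f)
    (hsym : ∀ x u w, u ⬝ᵥ fderiv ℝ f x w = w ⬝ᵥ fderiv ℝ f x u)
    (hpos : ∀ x v, v ≠ 0 → 0 < v ⬝ᵥ fderiv ℝ f x v) :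
    Function.Injective f ∧
      ∀ x₁ x₂, x₁ ≠ x₂ → 0 < (x₂ - x₁) ⬝ᵥ (f x₂ - f x₁) :=
  injective_of_posdef_jacobian_general f hf hpos
end

section
/- Let {O_i} be a basis of the traceless Hermitian N×N matrices and x ∈ ℝⁿ (n = N²−1). Define ρ_x = 𝟙/N + Σᵢ xᵢ Õᵢ, where {Õᵢ} is the dual basis with tr(O_i Õ_j) = δ_{ij}. If the matrix M_{ij}(x) = tr(ρ_x O_i O_j) − xᵢ xⱼ is positive semidefinite, then ρ_x is positive semidefinite, i.e., ρ_x is a valid density matrix with tr(ρ_x O_i) = x_i. -/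
/-!
For a vector `v`, the traceless part of the projector `v v†` is a real combination `∑ cᵢ Oᵢ`,
so `cᵀ M c ≥ 0` is the variance of this observable in `ρ_x`. Since `tr ρ_x = 1`, the variance
does not change when a multiple of `𝟙` is added, and the variance of `v v†` is `|v|² t - t²`
with `t = v† ρ_x v`. As `t` is real and `|v|² ≥ 0`, this forces `t ≥ 0`.
-/

open scoped ComplexOrder
open Matrix

namespace Matrix

section Variance

variable {m ι R : Type*} [Fintype m] [CommRing R]

def quantumVariance (ρ A : Matrix m m R) : R :=
  (ρ * A * A).trace - (ρ * A).trace ^ 2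

def covarianceMatrix (ρ : Matrix m m R) (O : ι → Matrix m m R) : Matrix ι ι R :=
  of fun i j => (ρ * O i * O j).trace - (ρ * O i).trace * (ρ * O j).trace

theorem quantumVariance_sub_smul_one [DecidableEq m] {ρ : Matrix m m R} (hρ : ρ.trace = 1)
    (A : Matrix m m R) (a : R) :
    quantumVariance ρ (A - a • 1) = quantumVariance ρ A := by
  have hexpand :
      ρ * (A - a • 1) * (A - a • 1) = ρ * A * A - (2 * a) • (ρ * A) + a ^ 2 • ρ := by
    simp only [Matrix.mul_sub, Matrix.sub_mul, Matrix.mul_smul, Matrix.smul_mul, Matrix.mul_one]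
    module
  rw [quantumVariance, quantumVariance, hexpand]
  simp only [Matrix.mul_sub, Matrix.mul_smul, Matrix.mul_one, trace_add, trace_sub, trace_smul, hρ,
    smul_eq_mul]
  ring

theorem quantumVariance_vecMulVec (ρ : Matrix m m R) (v w : m → R) :
    quantumVariance ρ (vecMulVec v w) = (w ⬝ᵥ v) * (w ⬝ᵥ ρ *ᵥ v) - (w ⬝ᵥ ρ *ᵥ v) ^ 2 := by
  rw [quantumVariance, Matrix.mul_assoc, vecMulVec_mul_vecMulVec, mul_vecMulVec, mul_vecMulVec,
    trace_vecMulVec, trace_vecMulVec, dotProduct_smul, smul_eq_mul, dotProduct_comm (ρ *ᵥ v) w]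

theorem dotProduct_covarianceMatrix_mulVec [Fintype ι] (ρ : Matrix m m R)
    (O : ι → Matrix m m R) (c : ι → R) :
    c ⬝ᵥ (covarianceMatrix ρ O *ᵥ c) = quantumVariance ρ (∑ i, c i • O i) := by
  have hsq : (ρ * (∑ i, c i • O i) * ∑ j, c j • O j).trace
      = ∑ i, ∑ j, c i * c j * (ρ * O i * O j).trace := by
    simp only [Finset.mul_sum, Finset.sum_mul, Matrix.mul_smul, Matrix.smul_mul, trace_sum,
      trace_smul, smul_eq_mul]
    rw [Finset.sum_comm]
    exact Finset.sum_congr rfl fun i _ => Finset.sum_congr rfl fun j _ => by ring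
  have hlin : (ρ * ∑ i, c i • O i).trace = ∑ i, c i * (ρ * O i).trace := by
    simp only [Finset.mul_sum, Matrix.mul_smul, trace_sum, trace_smul, smul_eq_mul]
  rw [quantumVariance, hsq, hlin, sq, Finset.sum_mul_sum, ← Finset.sum_sub_distrib]
  simp only [dotProduct, mulVec, covarianceMatrix, of_apply, Finset.mul_sum,
    ← Finset.sum_sub_distrib]
  exact Finset.sum_congr rfl fun i _ => Finset.sum_congr rfl fun j _ => by ring

end Variance

section TracelessPart

variable {m K : Type*} [Fintype m] [DecidableEq m] [Field K]

theorem IsHermitian.sub_trace_div_smul_one [StarRing K] {A : Matrix m m K}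
    (hA : A.IsHermitian) : (A - (A.trace / Fintype.card m) • 1).IsHermitian := by
  have htrace : IsSelfAdjoint A.trace := by rw [IsSelfAdjoint, ← trace_conjTranspose, hA.eq]
  exact hA.sub (isHermitian_one.smul (htrace.div (.natCast _)))

theorem trace_sub_trace_div_smul_one [CharZero K] [Nonempty m] (A : Matrix m m K) :
    (A - (A.trace / Fintype.card m) • 1).trace = 0 := by
  rw [trace_sub, trace_smul, trace_one, smul_eq_mul, div_mul_cancel₀ _ (by simp), sub_self]

end TracelessPart

end Matrix

section DualBasisState

variable {N : ℕ} {ι : Type*} [Fintype ι] {Od : ι → Matrix (Fin N) (Fin N) ℂ}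

theorem trace_inv_smul_one_add_sum_smul [NeZero N] (hdtr : ∀ k, (Od k).trace = 0)
    (x : ι → ℝ) :
    ((N : ℂ)⁻¹ • (1 : Matrix (Fin N) (Fin N) ℂ) + ∑ k, x k • Od k).trace = 1 := by
  simp [trace_sum, hdtr, NeZero.ne]

theorem trace_inv_smul_one_add_sum_smul_mul [DecidableEq ι] {O : ι → Matrix (Fin N) (Fin N) ℂ}
    (hOtr : ∀ i, (O i).trace = 0) (hdual : ∀ i j, (O i * Od j).trace = if i = j then 1 else 0)
    (x : ι → ℝ) (i : ι) :
    (((N : ℂ)⁻¹ • (1 : Matrix (Fin N) (Fin N) ℂ) + ∑ k, x k • Od k) * O i).trace = x i := by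
  simp [add_mul, Finset.sum_mul, trace_sum, hOtr, trace_mul_comm (Od _), hdual]

theorem isHermitian_inv_smul_one_add_sum_smul (hd : ∀ k, (Od k).IsHermitian) (x : ι → ℝ) :
    ((N : ℂ)⁻¹ • (1 : Matrix (Fin N) (Fin N) ℂ) + ∑ k, x k • Od k).IsHermitian :=
  (isHermitian_one.smul (by simp [IsSelfAdjoint])).add <|
    (isSelfAdjoint_sum _ fun k _ => (hd k).smul (IsSelfAdjoint.all (x k))).isHermitian

end DualBasisState

theorem Complex.nonneg_of_mul_sub_sq_nonneg {s t : ℂ} (hs : 0 ≤ s) (ht : t.im = 0)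
    (h : 0 ≤ s * t - t ^ 2) : 0 ≤ t := by
  rw [Complex.nonneg_iff] at hs h ⊢
  refine ⟨?_, ht.symm⟩
  simp only [Complex.sub_re, Complex.mul_re, sq, ht, ← hs.2] at h
  nlinarith [hs.1]

theorem posSemidef_of_covariance_posSemidef_general {N n : ℕ} [NeZero N]
    (O Od : Fin n → Matrix (Fin N) (Fin N) ℂ)
    (hOtr : ∀ i, (O i).trace = 0)
    (hspan : ∀ A : Matrix (Fin N) (Fin N) ℂ, A.IsHermitian → A.trace = 0 →
      ∃ c : Fin n → ℝ, A = ∑ i, c i • O i)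
    (hd : ∀ i, (Od i).IsHermitian) (hdtr : ∀ i, (Od i).trace = 0)
    (hdual : ∀ i j, (O i * Od j).trace = if i = j then 1 else 0)
    (x : Fin n → ℝ)
    (ρx : Matrix (Fin N) (Fin N) ℂ)
    (hρx : ρx = (N : ℂ)⁻¹ • (1 : Matrix (Fin N) (Fin N) ℂ) + ∑ k, x k • Od k)
    (hM : Matrix.PosSemidef (Matrix.of fun i j : Fin n =>
      (ρx * O i * O j).trace - (x i : ℂ) * (x j : ℂ))) :
    ρx.PosSemidef ∧ ρx.trace = 1 ∧ ∀ i, (ρx * O i).trace = (x i : ℂ) := by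
  have hρ_trace : ρx.trace = 1 := hρx ▸ trace_inv_smul_one_add_sum_smul hdtr x
  have hρ_mean : ∀ i, (ρx * O i).trace = x i :=
    hρx ▸ trace_inv_smul_one_add_sum_smul_mul hOtr hdual x
  have hρ_herm : ρx.IsHermitian := hρx ▸ isHermitian_inv_smul_one_add_sum_smul hd x
  refine ⟨.of_dotProduct_mulVec_nonneg hρ_herm fun v => ?_, hρ_trace, hρ_mean⟩
  set P := vecMulVec v (star v)
  obtain ⟨c, hc⟩ := hspan _ (posSemidef_vecMulVec_self_star v).isHermitian.sub_trace_div_smul_one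
    (trace_sub_trace_div_smul_one P)
  have hvar : 0 ≤ quantumVariance ρx P := by
    have hcov : covarianceMatrix ρx O
        = of fun i j => (ρx * O i * O j).trace - (x i : ℂ) * x j := by
      simp only [covarianceMatrix, hρ_mean]
    have hreal : star (fun i => (c i : ℂ)) = fun i => (c i : ℂ) :=
      funext fun i => Complex.conj_ofReal _
    simpa only [← hcov, hreal, dotProduct_covarianceMatrix_mulVec, Complex.coe_smul, ← hc,
      quantumVariance_sub_smul_one hρ_trace] using
      hM.dotProduct_mulVec_nonneg (fun i => (c i : ℂ))
  rw [quantumVariance_vecMulVec] at hvar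
  exact Complex.nonneg_of_mul_sub_sq_nonneg (dotProduct_star_self_nonneg v)
    (hρ_herm.im_star_dotProduct_mulVec_self v) hvar

/-- Let {Oᵢ} be a basis of the traceless Hermitian N×N matrices with dual basis
{Õᵢ} (tr(Oᵢ Õⱼ) = δᵢⱼ), and ρ_x = 𝟙/N + Σᵢ xᵢ Õᵢ. If the matrix
M_{ij}(x) = tr(ρ_x Oᵢ Oⱼ) − xᵢxⱼ is positive semidefinite, then ρ_x is a valid
density matrix with tr(ρ_x Oᵢ) = xᵢ. -/
theorem posSemidef_of_covariance_posSemidef {N n : ℕ} [NeZero N]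
    (O Od : Fin n → Matrix (Fin N) (Fin N) ℂ)
    (hO : ∀ i, (O i).IsHermitian) (hOtr : ∀ i, (O i).trace = 0)
    (hind : LinearIndependent ℝ O)
    (hspan : ∀ A : Matrix (Fin N) (Fin N) ℂ, A.IsHermitian → A.trace = 0 →
      ∃ c : Fin n → ℝ, A = ∑ i, c i • O i)
    (hd : ∀ i, (Od i).IsHermitian) (hdtr : ∀ i, (Od i).trace = 0)
    (hdual : ∀ i j, (O i * Od j).trace = if i = j then 1 else 0)
    (x : Fin n → ℝ)
    (ρx : Matrix (Fin N) (Fin N) ℂ)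
    (hρx : ρx = (N : ℂ)⁻¹ • (1 : Matrix (Fin N) (Fin N) ℂ) + ∑ k, x k • Od k)
    (hM : Matrix.PosSemidef (Matrix.of fun i j : Fin n =>
      (ρx * O i * O j).trace - (x i : ℂ) * (x j : ℂ))) :
    ρx.PosSemidef ∧ ρx.trace = 1 ∧ ∀ i, (ρx * O i).trace = (x i : ℂ) :=
  posSemidef_of_covariance_posSemidef_general O Od hOtr hspan hd hdtr hdual x ρx hρx hM
end
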